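/- Let p ∈ ℝ[x_1,...,x_ℓ] be a real zero polynomial such that the nonnegative orthant ℝ_{≥0}^ℓ is contained in C(p). Then p is stable. -/

import Mathlib

/-- A univariate real polynomial is real-rooted if it is nonzero and all of its
complex roots are real. -/
def RealRooted (f : Polynomial ℝ) : Prop :=
  f ≠ 0 ∧ ∀ z : ℂ, Polynomial.aeval z f = 0 → z.im = 0

/-- A multivariate real polynomial is a real zero polynomial if its restriction to
every line through the origin is real-rooted. -/
def IsRealZero {σ : Type*} (p : MvPolynomial σ ℝ) : Prop :=
  ∀ a : σ → ℝ,
    RealRooted (MvPolynomial.aeval (fun i => Polynomial.C (a i) * Polynomial.X) p)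

/-- A multivariate real polynomial is stable if its restriction to every line with
strictly positive direction vector is real-rooted. -/
def IsStable {σ : Type*} (p : MvPolynomial σ ℝ) : Prop :=
  ∀ a b : σ → ℝ, (∀ i, 0 < a i) →
    RealRooted (MvPolynomial.aeval
      (fun i => Polynomial.C (a i) * Polynomial.X + Polynomial.C (b i)) p)

/-- The rigidly convex set `C(p)` of a real zero polynomial `p`. -/
def rigidlyConvexSet {σ : Type*} (p : MvPolynomial σ ℝ) : Set (σ → ℝ) :=
  {a | ∀ t ∈ Set.Ioo (0 : ℝ) 1, MvPolynomial.eval (t • a) p ≠ 0}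

open Polynomial

noncomputable def Complex.abs : AbsoluteValue ℂ ℝ := NormedField.toAbsoluteValue ℂ

lemma Complex.continuous_abs : Continuous Complex.abs := continuous_norm

lemma Complex.norm_eq_abs (z : ℂ) : ‖z‖ = Complex.abs z := rfl

lemma Complex.sq_abs (z : ℂ) : Complex.abs z ^ 2 = Complex.normSq z := Complex.sq_norm z

lemma Complex.abs_im_le_abs (z : ℂ) : |z.im| ≤ Complex.abs z := Complex.abs_im_le_norm z


/-- product lower bound over a multiset -/
lemma multiset_prod_map_le {s : Multiset ℂ} {f g : ℂ → ℝ}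
    (h : ∀ r ∈ s, 0 ≤ f r ∧ f r ≤ g r) :
    (s.map f).prod ≤ (s.map g).prod := by
  induction s using Multiset.induction with
  | empty => simp
  | cons a s ih =>
    simp only [Multiset.map_cons, Multiset.prod_cons]
    have ha := h a (Multiset.mem_cons_self a s)
    have hs : ∀ r ∈ s, 0 ≤ f r ∧ f r ≤ g r := fun r hr => h r (Multiset.mem_cons_of_mem hr)
    have h1 : (0:ℝ) ≤ (s.map f).prod := by
      apply Multiset.prod_nonneg
      intro x hx
      obtain ⟨r, hr, rfl⟩ := Multiset.mem_map.mp hx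
      exact (hs r hr).1
    have h2 : (s.map f).prod ≤ (s.map g).prod := ih hs
    calc f a * (s.map f).prod ≤ g a * (s.map f).prod := by
          apply mul_le_mul_of_nonneg_right ha.2 h1
      _ ≤ g a * (s.map g).prod := by
          apply mul_le_mul_of_nonneg_left h2 (le_trans ha.1 ha.2)

lemma multiset_pow_le_prod {s : Multiset ℂ} {f : ℂ → ℝ} {δ : ℝ} (hδ : 0 ≤ δ)
    (h : ∀ r ∈ s, δ ≤ f r) : δ ^ Multiset.card s ≤ (s.map f).prod := by
  induction s using Multiset.induction with
  | empty => simp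
  | cons a s ih =>
    simp only [Multiset.map_cons, Multiset.prod_cons, Multiset.card_cons, pow_succ']
    have := ih (fun r hr => h r (Multiset.mem_cons_of_mem hr))
    exact mul_le_mul (h a (Multiset.mem_cons_self a s)) this (pow_nonneg hδ _)
      (le_trans hδ (h a (Multiset.mem_cons_self a s)))

/-- top coefficient of a finset product -/
lemma coeff_finsetProd_top {ι : Type*} [DecidableEq ι] (s : Finset ι) (f : ι → Polynomial ℂ) (m : ι → ℕ)
    (h : ∀ i ∈ s, natDegree (f i) ≤ m i) :
    (∏ i ∈ s, f i).coeff (∑ i ∈ s, m i) = ∏ i ∈ s, (f i).coeff (m i) := by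
  induction s using Finset.induction with
  | empty => simp
  | insert a s hnot ih =>
    rw [Finset.prod_insert hnot, Finset.prod_insert hnot, Finset.sum_insert hnot]
    rw [coeff_mul_add_eq_of_natDegree_le (h a (Finset.mem_insert_self a s))
      (le_trans (natDegree_prod_le _ _) (Finset.sum_le_sum
        (fun i hi => h i (Finset.mem_insert_of_mem hi))))]
    rw [ih (fun i hi => h i (Finset.mem_insert_of_mem hi))]

lemma root_bound {q : Polynomial ℂ} {N : ℕ} (hdeg : q.natDegree ≤ N)
    (hc : q.coeff N ≠ 0) {t : ℂ} (ht : q.eval t = 0) :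
    Complex.abs t ≤ 1 + (∑ j ∈ Finset.range N, Complex.abs (q.coeff j)) / Complex.abs (q.coeff N) := by
  set B := ∑ j ∈ Finset.range N, Complex.abs (q.coeff j) with hB
  have hcpos : 0 < Complex.abs (q.coeff N) := Complex.abs.pos hc
  have hBnn : 0 ≤ B := Finset.sum_nonneg fun _ _ => (Complex.abs.nonneg _)
  by_contra hcon
  push_neg at hcon
  have hT1 : (1:ℝ) < Complex.abs t := by
    have h0 : 0 ≤ B / Complex.abs (q.coeff N) := div_nonneg hBnn (le_of_lt hcpos)
    linarith
  have hTpos : 0 < Complex.abs t := by linarith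
  rcases Nat.eq_zero_or_pos N with hN | hN
  · subst hN
    have hq : q = Polynomial.C (q.coeff 0) := Polynomial.eq_C_of_natDegree_le_zero hdeg
    rw [hq] at ht
    simp only [eval_C] at ht
    exact hc ht
  have heval : q.eval t = ∑ j ∈ Finset.range (N + 1), q.coeff j * t ^ j :=
    Polynomial.eval_eq_sum_range' (lt_of_le_of_lt hdeg (Nat.lt_succ_self N)) t
  rw [Finset.sum_range_succ, ht] at heval
  have hkey : q.coeff N * t ^ N = -∑ j ∈ Finset.range N, q.coeff j * t ^ j := by
    linear_combination -heval
  have habs : (Complex.abs (q.coeff N) * Complex.abs t) * Complex.abs t ^ (N - 1)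
      ≤ B * Complex.abs t ^ (N - 1) := by
    have e1 : (Complex.abs (q.coeff N) * Complex.abs t) * Complex.abs t ^ (N - 1)
        = Complex.abs (q.coeff N * t ^ N) := by
      rw [map_mul, map_pow]
      have e2 : Complex.abs t ^ N = Complex.abs t * Complex.abs t ^ (N - 1) := by
        rw [← pow_succ']
        congr 1
        omega
      rw [e2]; ring
    rw [e1, hkey, map_neg_eq_map]
    calc Complex.abs (∑ j ∈ Finset.range N, q.coeff j * t ^ j)
        ≤ ∑ j ∈ Finset.range N, Complex.abs (q.coeff j * t ^ j) :=
          Complex.abs.sum_le _ _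
      _ ≤ ∑ j ∈ Finset.range N, Complex.abs (q.coeff j) * Complex.abs t ^ (N-1) := by
          apply Finset.sum_le_sum
          intro j hj
          rw [map_mul, map_pow]
          apply mul_le_mul_of_nonneg_left _ (Complex.abs.nonneg _)
          exact pow_le_pow_right₀ (le_of_lt hT1) (by have := Finset.mem_range.mp hj; omega)
      _ = B * Complex.abs t ^ (N-1) := by rw [← Finset.sum_mul]
  have hpowpos : 0 < Complex.abs t ^ (N-1) := pow_pos hTpos _
  have h2 : Complex.abs (q.coeff N) * Complex.abs t ≤ B :=
    le_of_mul_le_mul_right habs hpowpos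
  have h3 : Complex.abs t ≤ B / Complex.abs (q.coeff N) := by
    rw [le_div_iff₀ hcpos]
    linarith [h2]
  linarith
/-- lower bound for |eval| via distance to roots -/
lemma eval_abs_ge {q : Polynomial ℂ} {t : ℂ} {δ : ℝ} (hδ : 0 ≤ δ)
    (h : ∀ r ∈ q.roots, δ ≤ Complex.abs (t - r)) :
    Complex.abs q.leadingCoeff * δ ^ q.natDegree ≤ Complex.abs (q.eval t) := by
  have hcard : Multiset.card q.roots = q.natDegree :=
    (Polynomial.splits_iff_card_roots).mp (IsAlgClosed.splits q)
  have hfact := Polynomial.C_leadingCoeff_mul_prod_multiset_X_sub_C (p := q) hcard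
  have heval : q.eval t = q.leadingCoeff * ((q.roots.map (fun r => t - r)).prod) := by
    conv_lhs => rw [← hfact]
    rw [eval_mul, eval_C, Polynomial.eval_multiset_prod, Multiset.map_map]
    congr 1
    apply congrArg Multiset.prod
    apply Multiset.map_congr rfl
    intro r _
    simp
  rw [heval, map_mul]
  apply mul_le_mul_of_nonneg_left _ (Complex.abs.nonneg _)
  have e3 : Complex.abs ((q.roots.map (fun r => t - r)).prod)
      = ((q.roots.map (fun r => t - r)).map Complex.abs).prod :=
    map_multiset_prod Complex.abs.toMonoidHom _
  rw [e3, Multiset.map_map, ← hcard]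
  exact multiset_pow_le_prod hδ (fun r hr => h r hr)

/-- growth along the imaginary axis for real rooted polys -/
lemma realrooted_two_point {q : Polynomial ℂ} (hcard : Multiset.card q.roots = q.natDegree)
    (hreal : ∀ r ∈ q.roots, r.im = 0) {β β' : ℝ} (h1 : 0 < β) (h2 : β ≤ β') :
    Complex.abs (q.eval (β' * Complex.I)) * β ^ q.natDegree
      ≤ Complex.abs (q.eval (β * Complex.I)) * β' ^ q.natDegree := by
  have hfact := Polynomial.C_leadingCoeff_mul_prod_multiset_X_sub_C (p := q) hcard
  have heval : ∀ u : ℂ, q.eval u = q.leadingCoeff * ((q.roots.map (fun r => u - r)).prod) := by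
    intro u
    conv_lhs => rw [← hfact]
    rw [eval_mul, eval_C, Polynomial.eval_multiset_prod, Multiset.map_map]
    congr 1
    apply congrArg Multiset.prod
    apply Multiset.map_congr rfl
    intro r _
    simp
  have habs : ∀ u : ℂ, Complex.abs (q.eval u)
      = Complex.abs q.leadingCoeff * ((q.roots.map (fun r => Complex.abs (u - r))).prod) := by
    intro u
    rw [heval u, map_mul]
    congr 1
    simpa [Multiset.map_map, Function.comp] using
      map_multiset_prod Complex.abs.toMonoidHom (q.roots.map (fun r => u - r))
  rw [habs, habs]
  rw [mul_assoc, mul_assoc]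
  apply mul_le_mul_of_nonneg_left _ (Complex.abs.nonneg _)
  have econst : ∀ (c : ℝ), ((q.roots.map (fun _ => c)).prod) = c ^ q.natDegree := by
    intro c
    rw [Multiset.map_const', Multiset.prod_replicate, hcard]
  have e1 : (q.roots.map (fun r => Complex.abs ((β' : ℂ) * Complex.I - r))).prod * β ^ q.natDegree
      = (q.roots.map (fun r => Complex.abs ((β' : ℂ) * Complex.I - r) * β)).prod := by
    rw [← econst β, ← Multiset.prod_map_mul]
  have e2 : (q.roots.map (fun r => Complex.abs ((β : ℂ) * Complex.I - r))).prod * β' ^ q.natDegree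
      = (q.roots.map (fun r => Complex.abs ((β : ℂ) * Complex.I - r) * β')).prod := by
    rw [← econst β', ← Multiset.prod_map_mul]
  rw [e1, e2]
  apply multiset_prod_map_le
  intro r hr
  have him : r.im = 0 := hreal r hr
  constructor
  · positivity
  · have ha : 0 ≤ Complex.abs ((β' : ℂ) * Complex.I - r) * β :=
      mul_nonneg (Complex.abs.nonneg _) (le_of_lt h1)
    have hb : 0 ≤ Complex.abs ((β : ℂ) * Complex.I - r) * β' := by
      exact mul_nonneg (Complex.abs.nonneg _) (le_trans (le_of_lt h1) h2)
    have hsq : (Complex.abs ((β' : ℂ) * Complex.I - r) * β) ^ 2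
        ≤ (Complex.abs ((β : ℂ) * Complex.I - r) * β') ^ 2 := by
      have n1 : Complex.abs ((β' : ℂ) * Complex.I - r) ^ 2 = r.re ^ 2 + β' ^ 2 := by
        rw [Complex.sq_abs, Complex.normSq_apply]
        simp [him]
        ring
      have n2 : Complex.abs ((β : ℂ) * Complex.I - r) ^ 2 = r.re ^ 2 + β ^ 2 := by
        rw [Complex.sq_abs, Complex.normSq_apply]
        simp [him]
        ring
      rw [mul_pow, mul_pow, n1, n2]
      have hbb : β ^ 2 ≤ β' ^ 2 := by nlinarith
      have hre : r.re ^ 2 * β ^ 2 ≤ r.re ^ 2 * β' ^ 2 :=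
        mul_le_mul_of_nonneg_left hbb (sq_nonneg r.re)
      nlinarith [hre, hbb]
    calc Complex.abs ((β' : ℂ) * Complex.I - r) * β
        = Real.sqrt ((Complex.abs ((β' : ℂ) * Complex.I - r) * β) ^ 2) := by
          rw [Real.sqrt_sq ha]
      _ ≤ Real.sqrt ((Complex.abs ((β : ℂ) * Complex.I - r) * β') ^ 2) := Real.sqrt_le_sqrt hsq
      _ = Complex.abs ((β : ℂ) * Complex.I - r) * β' := by
          rw [Real.sqrt_sq hb]
section MvLemmas

variable {ℓ : ℕ}

/-- evaluating a polynomial-substituted mv polynomial -/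
lemma eval_aeval_poly (h : MvPolynomial (Fin ℓ) ℝ) (f : Fin ℓ → Polynomial ℂ) (t : ℂ) :
    (MvPolynomial.aeval f h).eval t = MvPolynomial.aeval (fun i => (f i).eval t) h := by
  induction h using MvPolynomial.induction_on with
  | C a => simp
  | add p q hp hq => simp [hp, hq]
  | mul_X p i hp => simp [hp]

/-- complex aeval of a univariate aeval -/
lemma caeval_aeval_poly (h : MvPolynomial (Fin ℓ) ℝ) (f : Fin ℓ → Polynomial ℝ) (t : ℂ) :
    Polynomial.aeval t (MvPolynomial.aeval f h)
      = MvPolynomial.aeval (fun i => Polynomial.aeval t (f i)) h := by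
  induction h using MvPolynomial.induction_on with
  | C a => simp
  | add p q hp hq => simp [hp, hq]
  | mul_X p i hp => simp [hp]

/-- aeval at a real point is the coercion of eval -/
lemma aeval_real (h : MvPolynomial (Fin ℓ) ℝ) (v : Fin ℓ → ℝ) :
    MvPolynomial.aeval (fun i => (v i : ℂ)) h = ((MvPolynomial.eval v h : ℝ) : ℂ) := by
  induction h using MvPolynomial.induction_on with
  | C a => simp
  | add p q hp hq => simp [hp, hq]
  | mul_X p i hp => simp [hp]

/-- aeval commutes with conjugation -/
lemma aeval_conj (h : MvPolynomial (Fin ℓ) ℝ) (z : Fin ℓ → ℂ) :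
    MvPolynomial.aeval (fun i => (starRingEnd ℂ) (z i)) h
      = (starRingEnd ℂ) (MvPolynomial.aeval z h) := by
  induction h using MvPolynomial.induction_on with
  | C a => simp
  | add p q hp hq => simp [hp, hq]
  | mul_X p i hp => simp [hp]

/-- continuity of aeval in the point -/
lemma continuous_aeval (h : MvPolynomial (Fin ℓ) ℝ) :
    Continuous fun z : Fin ℓ → ℂ => MvPolynomial.aeval z h := by
  induction h using MvPolynomial.induction_on with
  | C a => simpa using continuous_const
  | add p q hp hq => simp only [map_add]; exact hp.add hq
  | mul_X p i hp => simp only [map_mul, MvPolynomial.aeval_X]; exact hp.mul (continuous_apply i)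

/-- homogeneous scaling -/
lemma aeval_smul_homog {h : MvPolynomial (Fin ℓ) ℝ} {k : ℕ} (hh : h.IsHomogeneous k)
    (c : ℂ) (z : Fin ℓ → ℂ) :
    MvPolynomial.aeval (fun i => c * z i) h = c ^ k * MvPolynomial.aeval z h := by
  rw [MvPolynomial.aeval_def, MvPolynomial.aeval_def, MvPolynomial.eval₂_eq,
    MvPolynomial.eval₂_eq, Finset.mul_sum]
  apply Finset.sum_congr rfl
  intro d hd
  have hdeg : d.degree = k := by
    rw [Finsupp.degree_eq_weight_one]
    exact hh (MvPolynomial.mem_support_iff.mp hd)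
  have hprod : ∏ i ∈ d.support, (c * z i) ^ d i
      = c ^ k * ∏ i ∈ d.support, (z i) ^ d i := by
    calc ∏ i ∈ d.support, (c * z i) ^ d i
        = ∏ i ∈ d.support, (c ^ d i * z i ^ d i) := by
          apply Finset.prod_congr rfl
          intro i _
          rw [mul_pow]
      _ = (∏ i ∈ d.support, c ^ d i) * ∏ i ∈ d.support, z i ^ d i :=
          Finset.prod_mul_distrib
      _ = c ^ k * ∏ i ∈ d.support, z i ^ d i := by
          rw [Finset.prod_pow_eq_pow_sum, ← Finsupp.degree_apply, hdeg]
  rw [hprod]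
  ring
end MvLemmas
section Ecal
variable {ℓ : ℕ}

noncomputable def Ecal (p : MvPolynomial (Fin ℓ) ℝ) (N : ℕ) (w : ℂ) (z : Fin ℓ → ℂ) : ℂ :=
  ∑ k ∈ Finset.range (N+1), w ^ (N-k) * MvPolynomial.aeval z (MvPolynomial.homogeneousComponent k p)

lemma Ecal_one (p : MvPolynomial (Fin ℓ) ℝ) (z : Fin ℓ → ℂ) :
    Ecal p p.totalDegree 1 z = MvPolynomial.aeval z p := by
  unfold Ecal
  simp only [one_pow, one_mul]
  rw [← map_sum (MvPolynomial.aeval z)]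
  rw [MvPolynomial.sum_homogeneousComponent]

lemma Ecal_scal (p : MvPolynomial (Fin ℓ) ℝ) (N : ℕ) (c w : ℂ) (z : Fin ℓ → ℂ) :
    Ecal p N (c * w) (fun i => c * z i) = c ^ N * Ecal p N w z := by
  unfold Ecal
  rw [Finset.mul_sum]
  apply Finset.sum_congr rfl
  intro k hk
  have hk' : k ≤ N := by
    have := Finset.mem_range.mp hk; omega
  rw [aeval_smul_homog (MvPolynomial.homogeneousComponent_isHomogeneous k p) c z]
  rw [mul_pow]
  have : c ^ (N - k) * c ^ k = c ^ N := by
    rw [← pow_add]; congr 1; omega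
  calc c ^ (N-k) * w ^ (N-k) * (c ^ k * (MvPolynomial.aeval z) ((MvPolynomial.homogeneousComponent k) p))
      = (c ^ (N-k) * c ^ k) * (w ^ (N-k) * (MvPolynomial.aeval z) ((MvPolynomial.homogeneousComponent k) p)) := by ring
    _ = c ^ N * (w ^ (N - k) * (MvPolynomial.aeval z) ((MvPolynomial.homogeneousComponent k) p)) := by rw [this]

lemma Ecal_zero_vec (p : MvPolynomial (Fin ℓ) ℝ) (N : ℕ) (w : ℂ) :
    Ecal p N w (fun _ => (0:ℂ)) = w ^ N * ((MvPolynomial.coeff 0 p : ℝ) : ℂ) := by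
  unfold Ecal
  have hterm : ∀ k, MvPolynomial.aeval (fun _ : Fin ℓ => (0:ℂ)) (MvPolynomial.homogeneousComponent k p)
      = if k = 0 then ((MvPolynomial.coeff 0 p : ℝ) : ℂ) else 0 := by
    intro k
    have h0 : MvPolynomial.aeval (fun _ : Fin ℓ => (0:ℂ)) (MvPolynomial.homogeneousComponent k p)
        = algebraMap ℝ ℂ (MvPolynomial.constantCoeff (MvPolynomial.homogeneousComponent k p)) := by
      show (MvPolynomial.aeval (0 : Fin ℓ → ℂ)) _ = _
      rw [MvPolynomial.aeval_zero]
    rw [h0]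
    have hcc : MvPolynomial.constantCoeff (MvPolynomial.homogeneousComponent k p)
        = if k = 0 then MvPolynomial.coeff 0 p else 0 := by
      rw [MvPolynomial.constantCoeff_eq]
      rw [MvPolynomial.coeff_homogeneousComponent]
      have : (0 : Fin ℓ →₀ ℕ).degree = 0 := by simp [Finsupp.degree]
      rw [this]
      by_cases hk : k = 0
      · simp [hk]
      · simp [hk, Ne.symm hk]
    rw [hcc]
    by_cases hk : k = 0 <;> simp [hk]
  rw [Finset.sum_congr rfl (fun k _ => by rw [hterm k])]
  rw [Finset.sum_eq_single 0]
  · simp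
  · intro b _ hb
    simp [hb]
  · intro hmem
    simp at hmem
lemma Ecal_conj (p : MvPolynomial (Fin ℓ) ℝ) (N : ℕ) (w : ℂ) (z : Fin ℓ → ℂ) :
    Ecal p N ((starRingEnd ℂ) w) (fun i => (starRingEnd ℂ) (z i)) = (starRingEnd ℂ) (Ecal p N w z) := by
  unfold Ecal
  rw [map_sum]
  apply Finset.sum_congr rfl
  intro k _
  rw [aeval_conj, map_mul, map_pow]

end Ecal
section Ecal2
variable {ℓ : ℕ}

/-- hyperbolicity with respect to the homogenizing direction -/
lemma Ecal_ne_of_im {p : MvPolynomial (Fin ℓ) ℝ} (hp : IsRealZero p)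
    (c : Fin ℓ → ℝ) {w : ℂ} (hw : w.im ≠ 0) :
    Ecal p p.totalDegree w (fun i => (c i : ℂ)) ≠ 0 := by
  have hw0 : w ≠ 0 := fun h => hw (by simp [h])
  set N := p.totalDegree
  set τ := w⁻¹ with hτ
  have hvec : (fun i => (c i : ℂ)) = fun i => w * (τ * (c i : ℂ)) := by
    funext i
    rw [← mul_assoc, mul_inv_cancel₀ hw0, one_mul]
  have hscal : Ecal p N w (fun i => (c i : ℂ)) = w ^ N * MvPolynomial.aeval (fun i => τ * (c i : ℂ)) p := by
    rw [hvec]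
    have : w = w * 1 := by ring
    rw [this]
    have := Ecal_scal p N w 1 (fun i => τ * (c i : ℂ))
    simp only [mul_one] at this ⊢
    rw [this, Ecal_one]
  have hkey : MvPolynomial.aeval (fun i => τ * (c i : ℂ)) p
      = Polynomial.aeval τ (MvPolynomial.aeval (fun i => Polynomial.C (c i) * Polynomial.X) p) := by
    rw [caeval_aeval_poly]
    have hfun : (fun i => τ * (c i : ℂ)) = fun i => Polynomial.aeval τ (Polynomial.C (c i) * Polynomial.X) := by
      funext i
      rw [map_mul, Polynomial.aeval_C, Polynomial.aeval_X, Complex.coe_algebraMap]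
      ring
    exact congrArg (fun f => (MvPolynomial.aeval f) p) hfun
  have hns : Complex.normSq w ≠ 0 := by
    simpa [Complex.normSq_eq_zero] using hw0
  have hτim : τ.im ≠ 0 := by
    rw [hτ, Complex.inv_im]
    intro h
    rcases _root_.div_eq_zero_iff.mp h with h1 | h2
    · exact hw (neg_eq_zero.mp h1)
    · exact hns h2
  have hne : Polynomial.aeval τ (MvPolynomial.aeval (fun i => Polynomial.C (c i) * Polynomial.X) p) ≠ 0 := by
    intro h
    exact hτim ((hp c).2 τ h)
  rw [hscal, hkey]
  exact mul_ne_zero (pow_ne_zero _ hw0) hne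

/-- nonvanishing on the positive real direction over the orthant -/
lemma Ecal_pos_real {p : MvPolynomial (Fin ℓ) ℝ}
    (hF1 : ∀ c : Fin ℓ → ℝ, (∀ i, 0 ≤ c i) → ∀ s : ℝ, 0 < s → MvPolynomial.eval (s • c) p ≠ 0)
    (c : Fin ℓ → ℝ) (hc : ∀ i, 0 ≤ c i) {τ : ℝ} (hτ : 0 < τ) :
    Ecal p p.totalDegree (τ : ℂ) (fun i => (c i : ℂ)) ≠ 0 := by
  set N := p.totalDegree
  have hτ0 : (τ : ℂ) ≠ 0 := by
    simp only [ne_eq, Complex.ofReal_eq_zero]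
    exact ne_of_gt hτ
  have hvec : (fun i => (c i : ℂ)) = fun i => (τ:ℂ) * ((τ⁻¹ * c i : ℝ) : ℂ) := by
    funext i
    push_cast
    rw [← mul_assoc, mul_inv_cancel₀ hτ0, one_mul]
  have hscal : Ecal p N (τ:ℂ) (fun i => (c i : ℂ))
      = (τ:ℂ) ^ N * MvPolynomial.aeval (fun i => ((τ⁻¹ * c i : ℝ) : ℂ)) p := by
    rw [hvec]
    have h1 : (τ:ℂ) = (τ:ℂ) * 1 := by ring
    rw [h1]
    have := Ecal_scal p N (τ:ℂ) 1 (fun i => ((τ⁻¹ * c i : ℝ) : ℂ))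
    simp only [mul_one] at this ⊢
    rw [this, Ecal_one]
  rw [hscal, aeval_real]
  apply mul_ne_zero (pow_ne_zero _ hτ0)
  have : (fun i => τ⁻¹ * c i) = τ⁻¹ • c := by
    funext i; simp [Pi.smul_apply]
  rw [this]
  simp only [ne_eq, Complex.ofReal_eq_zero]
  exact hF1 c hc τ⁻¹ (inv_pos.mpr hτ)

end Ecal2
section Qpoly
variable {ℓ : ℕ}

noncomputable def Psi (p : MvPolynomial (Fin ℓ) ℝ) (k : ℕ) (z : Fin ℓ → ℂ) (y : Fin ℓ → ℝ) :
    Polynomial ℂ :=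
  MvPolynomial.aeval (fun i => Polynomial.C (z i) + Polynomial.C ((y i : ℂ)) * Polynomial.X)
    (MvPolynomial.homogeneousComponent k p)

lemma lin_natDegree (a b : ℂ) : (Polynomial.C a + Polynomial.C b * Polynomial.X).natDegree ≤ 1 := by
  apply le_trans (Polynomial.natDegree_add_le _ _)
  simp only [Polynomial.natDegree_C, max_le_iff]
  constructor
  · omega
  · exact le_trans (Polynomial.natDegree_C_mul_le _ _) (le_of_eq Polynomial.natDegree_X)

lemma lin_coeff_one (a b : ℂ) : (Polynomial.C a + Polynomial.C b * Polynomial.X).coeff 1 = b := by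
  simp

lemma Psi_eq_sum (p : MvPolynomial (Fin ℓ) ℝ) (k : ℕ) (z : Fin ℓ → ℂ) (y : Fin ℓ → ℝ) :
    Psi p k z y = ∑ d ∈ (MvPolynomial.homogeneousComponent k p).support,
      Polynomial.C ((MvPolynomial.coeff d (MvPolynomial.homogeneousComponent k p) : ℝ) : ℂ) *
        ∏ i ∈ d.support, (Polynomial.C (z i) + Polynomial.C ((y i:ℂ)) * Polynomial.X) ^ d i := by
  unfold Psi
  rw [MvPolynomial.aeval_def, MvPolynomial.eval₂_eq]
  apply Finset.sum_congr rfl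
  intro d _
  rw [Polynomial.algebraMap_apply, Complex.coe_algebraMap]

lemma degree_support {p : MvPolynomial (Fin ℓ) ℝ} {k : ℕ} {d : Fin ℓ →₀ ℕ}
    (hd : d ∈ (MvPolynomial.homogeneousComponent k p).support) :
    ∑ i ∈ d.support, d i = k := by
  have h := (MvPolynomial.homogeneousComponent_isHomogeneous k p)
    (MvPolynomial.mem_support_iff.mp hd)
  rw [← Finsupp.degree_apply, Finsupp.degree_eq_weight_one]
  exact h

lemma natDegree_Psi_le (p : MvPolynomial (Fin ℓ) ℝ) (k : ℕ) (z : Fin ℓ → ℂ) (y : Fin ℓ → ℝ) :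
    (Psi p k z y).natDegree ≤ k := by
  rw [Psi_eq_sum]
  apply Polynomial.natDegree_sum_le_of_forall_le
  intro d hd
  apply le_trans (Polynomial.natDegree_mul_le)
  rw [Polynomial.natDegree_C, zero_add]
  apply le_trans (Polynomial.natDegree_prod_le _ _)
  rw [← degree_support hd]
  apply Finset.sum_le_sum
  intro i _
  apply le_trans (Polynomial.natDegree_pow_le)
  calc d i * (Polynomial.C (z i) + Polynomial.C ((y i:ℂ)) * Polynomial.X).natDegree
      ≤ d i * 1 := Nat.mul_le_mul_left _ (lin_natDegree _ _)
    _ = d i := by omega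

lemma coeff_Psi_top (p : MvPolynomial (Fin ℓ) ℝ) (k : ℕ) (z : Fin ℓ → ℂ) (y : Fin ℓ → ℝ) :
    (Psi p k z y).coeff k
      = MvPolynomial.aeval (fun i => (y i : ℂ)) (MvPolynomial.homogeneousComponent k p) := by
  rw [Psi_eq_sum, Polynomial.finset_sum_coeff, MvPolynomial.aeval_def, MvPolynomial.eval₂_eq]
  apply Finset.sum_congr rfl
  intro d hd
  rw [Polynomial.coeff_C_mul]
  rw [Complex.coe_algebraMap]
  congr 1
  have hk : k = ∑ i ∈ d.support, d i := (degree_support hd).symm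
  have hbound : ∀ i ∈ d.support,
      ((Polynomial.C (z i) + Polynomial.C ((y i:ℂ)) * Polynomial.X) ^ d i).natDegree ≤ d i := by
    intro i _
    apply le_trans (Polynomial.natDegree_pow_le)
    calc d i * (Polynomial.C (z i) + Polynomial.C ((y i:ℂ)) * Polynomial.X).natDegree
        ≤ d i * 1 := Nat.mul_le_mul_left _ (lin_natDegree _ _)
      _ = d i := by omega
  rw [hk, coeff_finsetProd_top _ _ (fun i => d i) hbound]
  apply Finset.prod_congr rfl
  intro i _
  have h2 := Polynomial.coeff_pow_of_natDegree_le (m := d i) (lin_natDegree (z i) ((y i:ℂ)))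
  rw [mul_one] at h2
  rw [h2, lin_coeff_one]

noncomputable def qPoly (p : MvPolynomial (Fin ℓ) ℝ) (N : ℕ) (s ε : ℂ) (z : Fin ℓ → ℂ)
    (y : Fin ℓ → ℝ) : Polynomial ℂ :=
  ∑ k ∈ Finset.range (N+1), (Polynomial.C s + Polynomial.C ε * Polynomial.X) ^ (N - k) * Psi p k z y

lemma pow_lin_natDegree_le (s ε : ℂ) (m : ℕ) :
    ((Polynomial.C s + Polynomial.C ε * Polynomial.X) ^ m).natDegree ≤ m := by
  apply le_trans (Polynomial.natDegree_pow_le)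
  calc m * (Polynomial.C s + Polynomial.C ε * Polynomial.X).natDegree
      ≤ m * 1 := Nat.mul_le_mul_left _ (lin_natDegree _ _)
    _ = m := by omega

lemma pow_lin_coeff_top (s ε : ℂ) (m : ℕ) :
    ((Polynomial.C s + Polynomial.C ε * Polynomial.X) ^ m).coeff m = ε ^ m := by
  have h2 := Polynomial.coeff_pow_of_natDegree_le (m := m) (lin_natDegree s ε)
  rw [mul_one] at h2
  rw [h2, lin_coeff_one]

lemma eval_qPoly (p : MvPolynomial (Fin ℓ) ℝ) (N : ℕ) (s ε : ℂ) (z : Fin ℓ → ℂ)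
    (y : Fin ℓ → ℝ) (t : ℂ) :
    (qPoly p N s ε z y).eval t = Ecal p N (s + ε * t) (fun i => z i + (y i : ℂ) * t) := by
  unfold qPoly Ecal
  rw [Polynomial.eval_finset_sum]
  apply Finset.sum_congr rfl
  intro k _
  rw [Polynomial.eval_mul, Polynomial.eval_pow]
  simp only [Polynomial.eval_add, Polynomial.eval_mul, Polynomial.eval_C, Polynomial.eval_X]
  congr 1
  unfold Psi
  rw [eval_aeval_poly]
  apply congrArg (fun f => (MvPolynomial.aeval f) _)
  funext i
  simp

lemma natDegree_qPoly_le (p : MvPolynomial (Fin ℓ) ℝ) (N : ℕ) (s ε : ℂ) (z : Fin ℓ → ℂ)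
    (y : Fin ℓ → ℝ) : (qPoly p N s ε z y).natDegree ≤ N := by
  unfold qPoly
  apply Polynomial.natDegree_sum_le_of_forall_le
  intro k hk
  have hkN : k ≤ N := by have := Finset.mem_range.mp hk; omega
  apply le_trans (Polynomial.natDegree_mul_le)
  have := pow_lin_natDegree_le s ε (N - k)
  have := natDegree_Psi_le p k z y
  omega

lemma coeff_qPoly_top (p : MvPolynomial (Fin ℓ) ℝ) (N : ℕ) (s ε : ℂ) (z : Fin ℓ → ℂ)
    (y : Fin ℓ → ℝ) :
    (qPoly p N s ε z y).coeff N = Ecal p N ε (fun i => (y i : ℂ)) := by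
  unfold qPoly Ecal
  rw [Polynomial.finset_sum_coeff]
  apply Finset.sum_congr rfl
  intro k hk
  have hkN : k ≤ N := by have := Finset.mem_range.mp hk; omega
  have e := Polynomial.coeff_mul_add_eq_of_natDegree_le (pow_lin_natDegree_le s ε (N-k))
    (natDegree_Psi_le p k z y)
  rw [show N - k + k = N from by omega] at e
  rw [e, coeff_Psi_top, pow_lin_coeff_top]

end Qpoly
section Cont
variable {ℓ : ℕ}

lemma continuous_Ecal (p : MvPolynomial (Fin ℓ) ℝ) (N : ℕ) :
    Continuous fun wz : ℂ × (Fin ℓ → ℂ) => Ecal p N wz.1 wz.2 := by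
  unfold Ecal
  apply continuous_finset_sum
  intro k _
  exact ((continuous_fst.pow _)).mul ((continuous_aeval _).comp continuous_snd)

/-- continuity of the coefficients of an affine substitution -/
lemma continuous_coeff_aeval (h : MvPolynomial (Fin ℓ) ℝ) (y : Fin ℓ → ℝ) (j : ℕ) :
    Continuous fun z : Fin ℓ → ℂ =>
      (MvPolynomial.aeval
        (fun i => Polynomial.C (z i) + Polynomial.C ((y i : ℂ)) * Polynomial.X) h).coeff j := by
  induction h using MvPolynomial.induction_on generalizing j with
  | C a =>
    simp only [MvPolynomial.aeval_C, Polynomial.algebraMap_apply, Complex.coe_algebraMap,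
      Polynomial.coeff_C]
    exact continuous_const
  | add p q hp hq =>
    simp only [map_add, Polynomial.coeff_add]
    exact (hp j).add (hq j)
  | mul_X p i hp =>
    simp only [map_mul, MvPolynomial.aeval_X]
    have key : ∀ z : Fin ℓ → ℂ,
        ((MvPolynomial.aeval
          (fun i => Polynomial.C (z i) + Polynomial.C ((y i : ℂ)) * Polynomial.X) p)
          * (Polynomial.C (z i) + Polynomial.C ((y i : ℂ)) * Polynomial.X)).coeff j
        = (MvPolynomial.aeval
            (fun i => Polynomial.C (z i) + Polynomial.C ((y i : ℂ)) * Polynomial.X) p).coeff j * z i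
          + (if j = 0 then 0 else
              (MvPolynomial.aeval
                (fun i => Polynomial.C (z i) + Polynomial.C ((y i : ℂ)) * Polynomial.X) p).coeff (j-1) * (y i : ℂ)) := by
      intro z
      set A := MvPolynomial.aeval
          (fun i => Polynomial.C (z i) + Polynomial.C ((y i : ℂ)) * Polynomial.X) p
      rw [mul_add, Polynomial.coeff_add, Polynomial.coeff_mul_C, ← mul_assoc]
      congr 1
      by_cases hj : j = 0
      · subst hj
        simp [Polynomial.mul_coeff_zero]
      · obtain ⟨m, rfl⟩ := Nat.exists_eq_succ_of_ne_zero hj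
        rw [Polynomial.coeff_mul_X, Polynomial.coeff_mul_C]
        simp
    simp only [key]
    apply Continuous.add
    · exact (hp j).mul (continuous_apply i)
    · by_cases hj : j = 0
      · simp only [hj, if_true]
        exact continuous_const
      · simp only [hj, if_false]
        exact (hp (j-1)).mul continuous_const

lemma continuous_coeff_qPoly (p : MvPolynomial (Fin ℓ) ℝ) (N : ℕ) (s ε : ℂ)
    (x y : Fin ℓ → ℝ) (j : ℕ) :
    Continuous fun μ : ℝ =>
      (qPoly p N s ε (fun i => ((μ * x i : ℝ) : ℂ)) y).coeff j := by
  unfold qPoly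
  simp only [Polynomial.finset_sum_coeff]
  apply continuous_finset_sum
  intro k _
  simp only [Polynomial.coeff_mul]
  apply continuous_finset_sum
  intro ab _
  apply Continuous.mul continuous_const
  have hz : Continuous fun μ : ℝ => (fun i => ((μ * x i : ℝ) : ℂ)) := by
    apply continuous_pi
    intro i
    exact Complex.continuous_ofReal.comp (continuous_id.mul continuous_const)
  exact (continuous_coeff_aeval (MvPolynomial.homogeneousComponent k p) y ab.2).comp hz

end Cont
section LemmaA
variable {ℓ : ℕ}

theorem lemmaA {p : MvPolynomial (Fin ℓ) ℝ} (hp : IsRealZero p)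
    (hF1 : ∀ c : Fin ℓ → ℝ, (∀ i, 0 ≤ c i) → ∀ s : ℝ, 0 < s → MvPolynomial.eval (s • c) p ≠ 0)
    (x y : Fin ℓ → ℝ) (hy : ∀ i, 0 < y i) {ε : ℝ} (hε : 0 < ε)
    {s t : ℂ} (hs : 0 < s.im) (ht : 0 ≤ t.im) :
    Complex.abs (Ecal p p.totalDegree (ε:ℂ) (fun i => (y i : ℂ))) * t.im ^ p.totalDegree
      ≤ Complex.abs (Ecal p p.totalDegree (s + (ε:ℂ) * t)
          (fun i => ((1 * x i : ℝ) : ℂ) + (y i : ℂ) * t)) := by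
  set N := p.totalDegree with hN
  set c0 : ℂ := Ecal p N (ε:ℂ) (fun i => (y i : ℂ)) with hc0def
  have hc0 : c0 ≠ 0 := Ecal_pos_real hF1 y (fun i => le_of_lt (hy i)) hε
  have habsc0 : 0 < Complex.abs c0 := Complex.abs.pos hc0
  set Q : ℝ → Polynomial ℂ := fun μ => qPoly p N s (ε:ℂ) (fun i => ((μ * x i : ℝ):ℂ)) y with hQdef
  have hQcoeff : ∀ μ, (Q μ).coeff N = c0 := fun μ => coeff_qPoly_top p N s (ε:ℂ) _ y
  have hQne : ∀ μ, Q μ ≠ 0 := by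
    intro μ h
    apply hc0
    rw [← hQcoeff μ, h, Polynomial.coeff_zero]
  have hQdegle : ∀ μ, (Q μ).natDegree ≤ N := fun μ => natDegree_qPoly_le p N s (ε:ℂ) _ y
  have hQdeg : ∀ μ, (Q μ).natDegree = N := by
    intro μ
    refine le_antisymm (hQdegle μ) ?_
    apply Polynomial.le_natDegree_of_ne_zero
    rw [hQcoeff μ]
    exact hc0
  have hQlead : ∀ μ, (Q μ).leadingCoeff = c0 := by
    intro μ
    rw [Polynomial.leadingCoeff, hQdeg μ, hQcoeff μ]
  have hQeval : ∀ μ (τ : ℂ), (Q μ).eval τ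
      = Ecal p N (s + (ε:ℂ) * τ) (fun i => ((μ * x i : ℝ):ℂ) + (y i : ℂ) * τ) :=
    fun μ τ => eval_qPoly p N s (ε:ℂ) _ y τ
  set S : Set ℝ := {μ | ∀ τ : ℂ, 0 ≤ τ.im →
      Ecal p N (s + (ε:ℂ) * τ) (fun i => ((μ * x i : ℝ):ℂ) + (y i : ℂ) * τ) ≠ 0} with hSdef
  -- no real roots ever
  have hrealcase : ∀ (μ : ℝ) (τ : ℂ), τ.im = 0 →
      Ecal p N (s + (ε:ℂ) * τ) (fun i => ((μ * x i : ℝ):ℂ) + (y i : ℂ) * τ) ≠ 0 := by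
    intro μ τ him
    have hτ : τ = ((τ.re : ℝ) : ℂ) := by
      apply Complex.ext
      · simp
      · simp [him]
    have hvec : (fun i => ((μ * x i : ℝ):ℂ) + (y i : ℂ) * τ)
        = fun i => ((μ * x i + y i * τ.re : ℝ) : ℂ) := by
      funext i
      push_cast
      rw [← hτ]
    have hwim : (s + (ε:ℂ) * τ).im ≠ 0 := by
      rw [Complex.add_im, Complex.mul_im]
      simp only [Complex.ofReal_re, Complex.ofReal_im, him, mul_zero, zero_mul, add_zero]
      linarith
    rw [hvec]
    exact Ecal_ne_of_im hp _ hwim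
  -- roots of Q μ for μ ∈ S are in the open lower half plane
  have hroots : ∀ μ ∈ S, ∀ r ∈ (Q μ).roots, r.im < 0 := by
    intro μ hμ r hr
    have hroot : (Q μ).eval r = 0 := (Polynomial.mem_roots (hQne μ)).mp hr
    by_contra hcon
    push_neg at hcon
    exact (hμ r hcon) (by rw [← hQeval]; exact hroot)
  -- quantitative bound for μ ∈ S
  have hSbound : ∀ μ ∈ S, ∀ τ : ℂ, 0 ≤ τ.im →
      Complex.abs c0 * τ.im ^ N
        ≤ Complex.abs (Ecal p N (s + (ε:ℂ) * τ) (fun i => ((μ * x i : ℝ):ℂ) + (y i : ℂ) * τ)) := by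
    intro μ hμ τ hτ
    have hdist : ∀ r ∈ (Q μ).roots, τ.im ≤ Complex.abs (τ - r) := by
      intro r hr
      have hrim : r.im < 0 := hroots μ hμ r hr
      calc τ.im ≤ τ.im - r.im := by linarith
        _ = (τ - r).im := by rw [Complex.sub_im]
        _ ≤ |(τ - r).im| := le_abs_self _
        _ ≤ Complex.abs (τ - r) := Complex.abs_im_le_abs _
    have := eval_abs_ge (q := Q μ) (t := τ) (δ := τ.im) hτ hdist
    rw [hQlead μ, hQdeg μ, hQeval μ τ] at this
    exact this
  -- 0 ∈ S
  have h0S : (0:ℝ) ∈ S := by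
    intro τ hτ hzero
    have hvec0 : (fun i => ((0 * x i : ℝ):ℂ) + (y i : ℂ) * τ) = fun i => τ * (y i : ℂ) := by
      funext i
      push_cast
      ring
    rw [hvec0] at hzero
    by_cases hτ0 : τ = 0
    · rw [hτ0] at hzero
      rw [show (fun i : Fin ℓ => (0:ℂ) * (y i:ℂ)) = fun _ : Fin ℓ => (0:ℂ) from by
        funext i; ring] at hzero
      rw [Ecal_zero_vec] at hzero
      have hs0 : s + (ε:ℂ) * 0 ≠ 0 := by
        intro h
        have h2 : s = 0 := by simpa using h
        rw [h2] at hs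
        simp at hs
      have hcc : MvPolynomial.coeff 0 p ≠ 0 := by
        have h1 := hF1 (fun _ => 0) (fun i => le_refl 0) 1 one_pos
        rw [show (1:ℝ) • (fun _ : Fin ℓ => (0:ℝ)) = (0 : Fin ℓ → ℝ) from by
          funext i; simp] at h1
        intro h
        apply h1
        rw [MvPolynomial.eval_zero]
        rw [MvPolynomial.constantCoeff_eq]
        exact h
      rcases mul_eq_zero.mp hzero with h | h
      · exact hs0 ((pow_eq_zero_iff'.mp h).1)
      · rw [Complex.ofReal_eq_zero] at h
        exact hcc h
    · set σ := (s + (ε:ℂ)*τ) / τ with hσdef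
      have hfac : s + (ε:ℂ)*τ = τ * σ := by
        rw [hσdef]
        field_simp
      have hscal := Ecal_scal p N τ σ (fun i => (y i : ℂ))
      rw [hfac, hscal] at hzero
      have hτN : τ ^ N ≠ 0 := pow_ne_zero _ hτ0
      have hEσ : Ecal p N σ (fun i => (y i:ℂ)) = 0 := by
        rcases mul_eq_zero.mp hzero with h | h
        · exact absurd h hτN
        · exact h
      have hσim : σ.im = 0 := by
        by_contra h
        exact Ecal_ne_of_im hp y h hEσ
      have hσre : σ.re ≤ 0 := by
        by_contra h
        push_neg at h
        have hσr : σ = ((σ.re : ℝ) : ℂ) := by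
          apply Complex.ext
          · simp
          · simp [hσim]
        rw [hσr] at hEσ
        exact Ecal_pos_real hF1 y (fun i => le_of_lt (hy i)) h hEσ
      have hs_eq : s = τ * (σ - (ε:ℂ)) := by
        linear_combination hfac
      have him : s.im = τ.im * (σ.re - ε) := by
        rw [hs_eq, Complex.mul_im]
        simp only [Complex.sub_im, Complex.sub_re, Complex.ofReal_im, Complex.ofReal_re, hσim,
          sub_zero, mul_zero, zero_mul]
        ring
      nlinarith [hs, hτ, hσre, hε, him]
  -- S is closed
  have hScont : ∀ τ : ℂ, Continuous fun μ : ℝ =>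
      Ecal p N (s + (ε:ℂ) * τ) (fun i => ((μ * x i : ℝ):ℂ) + (y i : ℂ) * τ) := by
    intro τ
    have h1 : Continuous fun μ : ℝ => ((s + (ε:ℂ)*τ, fun i => ((μ * x i : ℝ):ℂ) + (y i : ℂ) * τ) :
        ℂ × (Fin ℓ → ℂ)) := by
      apply Continuous.prodMk continuous_const
      apply continuous_pi
      intro i
      apply Continuous.add
      · exact Complex.continuous_ofReal.comp (continuous_id.mul continuous_const)
      · exact continuous_const
    exact (continuous_Ecal p N).comp h1
  have hSclosed : IsClosed S := by
    apply IsSeqClosed.isClosed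
    intro f μ0 hf hlim
    intro τ hτ
    rcases eq_or_lt_of_le hτ with him | him
    · exact hrealcase μ0 τ him.symm
    · intro hzero
      have hb : ∀ n, Complex.abs c0 * τ.im ^ N
          ≤ Complex.abs (Ecal p N (s + (ε:ℂ) * τ) (fun i => ((f n * x i : ℝ):ℂ) + (y i : ℂ) * τ)) :=
        fun n => hSbound (f n) (hf n) τ hτ
      have hcont : Continuous fun μ : ℝ => Complex.abs
          (Ecal p N (s + (ε:ℂ) * τ) (fun i => ((μ * x i : ℝ):ℂ) + (y i : ℂ) * τ)) :=
        Complex.continuous_abs.comp (hScont τ)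
      have hlim2 := (hcont.continuousAt (x := μ0)).tendsto.comp hlim
      have hge : Complex.abs c0 * τ.im ^ N
          ≤ Complex.abs (Ecal p N (s + (ε:ℂ) * τ) (fun i => ((μ0 * x i : ℝ):ℂ) + (y i : ℂ) * τ)) :=
        ge_of_tendsto' hlim2 (fun n => hb n)
      rw [hzero] at hge
      simp only [map_zero] at hge
      have hpos : 0 < Complex.abs c0 * τ.im ^ N := by positivity
      linarith
  -- complement of S is closed
  have hSc_closed : IsClosed Sᶜ := by
    apply IsSeqClosed.isClosed
    intro f μ0 hf hlim
    by_contra hμ0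
    rw [Set.mem_compl_iff, not_not] at hμ0
    have hex : ∀ n, ∃ τ : ℂ, 0 ≤ τ.im ∧
        Ecal p N (s + (ε:ℂ) * τ) (fun i => ((f n * x i : ℝ):ℂ) + (y i : ℂ) * τ) = 0 := by
      intro n
      have := hf n
      rw [Set.mem_compl_iff, hSdef] at this
      simp only [Set.mem_setOf_eq, not_forall] at this
      obtain ⟨τ, hτ1, hτ2⟩ := this
      exact ⟨τ, hτ1, by rwa [not_not] at hτ2⟩
    choose tau htau1 htau2 using hex
    -- coefficient bound
    have hgcont : Continuous fun μ : ℝ => ∑ j ∈ Finset.range N, Complex.abs ((Q μ).coeff j) := by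
      apply continuous_finset_sum
      intro j _
      exact Complex.continuous_abs.comp (continuous_coeff_qPoly p N s (ε:ℂ) x y j)
    have hgtend := (hgcont.continuousAt (x := μ0)).tendsto.comp hlim
    obtain ⟨B, hB⟩ := hgtend.bddAbove_range
    set R : ℝ := 1 + B / Complex.abs c0 with hRdef
    have htaubound : ∀ n, Complex.abs (tau n) ≤ R := by
      intro n
      have hroot : (Q (f n)).eval (tau n) = 0 := by
        rw [hQeval]
        exact htau2 n
      have h1 := root_bound (hQdegle (f n)) (by rw [hQcoeff]; exact hc0) hroot
      rw [hQcoeff] at h1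
      apply le_trans h1
      rw [hRdef]
      have hBn : ∑ j ∈ Finset.range N, Complex.abs ((Q (f n)).coeff j) ≤ B := by
        apply hB
        exact Set.mem_range_self n
      gcongr
    -- extract a convergent subsequence
    have hmem : ∀ n, tau n ∈ Metric.closedBall (0:ℂ) R := by
      intro n
      rw [Metric.mem_closedBall, dist_zero_right, Complex.norm_eq_abs]
      exact htaubound n
    obtain ⟨tstar, htstar, φ, hφmono, hφtend⟩ :=
      (isCompact_closedBall (0:ℂ) R).tendsto_subseq hmem
    -- limit is a zero with nonnegative imaginary part
    have hjoint : Continuous fun mt : ℝ × ℂ =>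
        Ecal p N (s + (ε:ℂ) * mt.2) (fun i => ((mt.1 * x i : ℝ):ℂ) + (y i : ℂ) * mt.2) := by
      have h1 : Continuous fun mt : ℝ × ℂ =>
          ((s + (ε:ℂ) * mt.2, fun i => ((mt.1 * x i : ℝ):ℂ) + (y i : ℂ) * mt.2) :
            ℂ × (Fin ℓ → ℂ)) := by
        apply Continuous.prodMk
        · exact continuous_const.add (continuous_const.mul continuous_snd)
        · apply continuous_pi
          intro i
          apply Continuous.add
          · exact Complex.continuous_ofReal.comp (continuous_fst.mul continuous_const)
          · exact continuous_const.mul continuous_snd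
      exact (continuous_Ecal p N).comp h1
    have hpairtend : Filter.Tendsto (fun n => ((f (φ n), tau (φ n)) : ℝ × ℂ))
        Filter.atTop (nhds (μ0, tstar)) := by
      apply Filter.Tendsto.prodMk_nhds
      · exact hlim.comp hφmono.tendsto_atTop
      · exact hφtend
    have hzerolim : Ecal p N (s + (ε:ℂ) * tstar)
        (fun i => ((μ0 * x i : ℝ):ℂ) + (y i : ℂ) * tstar) = 0 := by
      have h2 := (hjoint.continuousAt (x := (μ0, tstar))).tendsto.comp hpairtend
      have h2' : Filter.Tendsto (fun _ : ℕ => (0:ℂ)) Filter.atTop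
          (nhds (Ecal p N (s + (ε:ℂ) * tstar)
            (fun i => ((μ0 * x i : ℝ):ℂ) + (y i : ℂ) * tstar))) := by
        apply Filter.Tendsto.congr _ h2
        intro n
        simp only [Function.comp_apply]
        exact htau2 (φ n)
      exact (tendsto_nhds_unique h2' tendsto_const_nhds)
    have htstarim : 0 ≤ tstar.im := by
      have h4 : Filter.Tendsto (fun n => (tau (φ n)).im) Filter.atTop (nhds tstar.im) :=
        (Complex.continuous_im.continuousAt.tendsto).comp hφtend
      apply ge_of_tendsto' h4
      intro n
      exact htau1 (φ n)
    exact hμ0 tstar htstarim hzerolim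
  -- connectedness: S = univ
  have hSuniv : S = Set.univ := by
    rcases isClopen_iff.mp ⟨hSclosed, isClosed_compl_iff.mp hSc_closed⟩ with h | h
    · exfalso
      rw [h] at h0S
      exact h0S
    · exact h
  have h1S : (1:ℝ) ∈ S := by
    rw [hSuniv]
    trivial
  exact hSbound 1 h1S t ht

end LemmaA
section MainNonvanish
variable {ℓ : ℕ}

theorem main_nonvanish {p : MvPolynomial (Fin ℓ) ℝ} (hp : IsRealZero p)
    (hF1 : ∀ c : Fin ℓ → ℝ, (∀ i, 0 ≤ c i) → ∀ s : ℝ, 0 < s → MvPolynomial.eval (s • c) p ≠ 0)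
    (x y : Fin ℓ → ℝ) (hy : ∀ i, 0 < y i) :
    MvPolynomial.aeval (fun i => (x i : ℂ) + (y i : ℂ) * Complex.I) p ≠ 0 := by
  set N := p.totalDegree with hNdef
  intro h0
  have hE0 : Ecal p N 1 (fun i => (x i : ℂ) + (y i : ℂ) * Complex.I) = 0 := by
    rw [Ecal_one]
    exact h0
  -- lemma A specialized
  have lemA : ∀ (ε : ℝ), 0 < ε → ∀ (s t : ℂ), 0 < s.im → 0 ≤ t.im →
      Complex.abs (Ecal p N (ε:ℂ) (fun i => (y i:ℂ))) * t.im ^ N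
        ≤ Complex.abs (Ecal p N (s + (ε:ℂ)*t) (fun i => ((x i:ℝ):ℂ) + (y i:ℂ)*t)) := by
    intro ε hε s t hs ht
    have h := lemmaA hp hF1 x y hy hε hs ht
    rw [show (fun i => ((1 * x i:ℝ):ℂ) + (y i:ℂ)*t) = fun i => ((x i:ℝ):ℂ) + (y i:ℂ)*t from by
      funext i; norm_num] at h
    exact h
  -- step 1 : no zeros with positive imaginary part on perturbed lines
  have step1 : ∀ (ε : ℝ), 0 < ε → ∀ r : ℂ, 0 < r.im →
      Ecal p N (1 + (ε:ℂ)*r) (fun i => (x i:ℂ) + (y i:ℂ)*r) ≠ 0 := by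
    intro ε hε r hr hzero
    set cε := Ecal p N (ε:ℂ) (fun i => (y i:ℂ)) with hcεdef
    have hcε : cε ≠ 0 := Ecal_pos_real hF1 y (fun i => le_of_lt (hy i)) hε
    have habscε : 0 < Complex.abs cε := Complex.abs.pos hcε
    set g : ℝ → ℝ := fun θ => Complex.abs (Ecal p N (((1:ℂ) + (θ:ℂ)*Complex.I) + (ε:ℂ)*r)
        (fun i => (x i:ℂ) + (y i:ℂ)*r)) with hgdef
    have hbound : ∀ θ : ℝ, 0 < θ → Complex.abs cε * r.im ^ N ≤ g θ := by
      intro θ hθ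
      apply lemA ε hε ((1:ℂ) + (θ:ℂ)*Complex.I) r _ (le_of_lt hr)
      simp only [Complex.add_im, Complex.mul_im, Complex.one_im, Complex.ofReal_re,
        Complex.ofReal_im, Complex.I_re, Complex.I_im, mul_zero, zero_mul, mul_one, zero_add,
        add_zero]
      exact hθ
    have hgcont : Continuous g := by
      apply Complex.continuous_abs.comp
      have h1 : Continuous fun θ : ℝ => ((((1:ℂ) + (θ:ℂ)*Complex.I) + (ε:ℂ)*r,
          fun i => (x i:ℂ) + (y i:ℂ)*r) : ℂ × (Fin ℓ → ℂ)) := by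
        apply Continuous.prodMk
        · exact (continuous_const.add (Complex.continuous_ofReal.mul continuous_const)).add
            continuous_const
        · exact continuous_const
      exact (continuous_Ecal p N).comp h1
    have hθn : Filter.Tendsto (fun n : ℕ => 1 / ((n:ℝ) + 1)) Filter.atTop (nhds 0) :=
      tendsto_one_div_add_atTop_nhds_zero_nat
    have hgtend : Filter.Tendsto (fun n : ℕ => g (1 / ((n:ℝ) + 1))) Filter.atTop (nhds (g 0)) :=
      (hgcont.continuousAt.tendsto).comp hθn
    have hge : Complex.abs cε * r.im ^ N ≤ g 0 := by
      apply ge_of_tendsto' hgtend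
      intro n
      apply hbound
      positivity
    have hg0 : g 0 = 0 := by
      rw [hgdef]
      simp only []
      rw [show ((1:ℂ) + ((0:ℝ):ℂ)*Complex.I) + (ε:ℂ)*r = 1 + (ε:ℂ)*r from by
        push_cast; ring]
      rw [hzero]
      simp
    rw [hg0] at hge
    have : 0 < Complex.abs cε * r.im ^ N := by positivity
    linarith
  -- step 1' : no zeros off the real axis on perturbed lines
  have step1' : ∀ (ε : ℝ), 0 < ε → ∀ r : ℂ, r.im ≠ 0 →
      Ecal p N (1 + (ε:ℂ)*r) (fun i => (x i:ℂ) + (y i:ℂ)*r) ≠ 0 := by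
    intro ε hε r hrim hzero
    rcases lt_or_gt_of_ne hrim with hneg | hpos
    · -- conjugate
      have hconj := Ecal_conj p N (1 + (ε:ℂ)*r) (fun i => (x i:ℂ) + (y i:ℂ)*r)
      rw [hzero, map_zero] at hconj
      have hw : (starRingEnd ℂ) (1 + (ε:ℂ)*r) = 1 + (ε:ℂ) * ((starRingEnd ℂ) r) := by
        simp [map_add, map_mul, Complex.conj_ofReal]
      have hv : (fun i => (starRingEnd ℂ) ((x i:ℂ) + (y i:ℂ)*r))
          = fun i => (x i:ℂ) + (y i:ℂ) * ((starRingEnd ℂ) r) := by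
        funext i
        simp [map_add, map_mul, Complex.conj_ofReal]
      rw [hw, hv] at hconj
      have : 0 < ((starRingEnd ℂ) r).im := by
        rw [Complex.conj_im]
        linarith
      exact step1 ε hε _ this hconj
    · exact step1 ε hε r hpos hzero
  -- choose β' ≥ 1 avoiding the zeros of the limit polynomial
  set ω : Polynomial ℂ := MvPolynomial.aeval
      (fun i => Polynomial.C ((x i:ℂ)) + Polynomial.C (Complex.I * (y i:ℂ)) * Polynomial.X) p
      with hωdef
  have hωeval : ∀ τ : ℂ, ω.eval τ = MvPolynomial.aeval (fun i => (x i:ℂ) + Complex.I * (y i:ℂ) * τ) p := by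
    intro τ
    rw [hωdef, eval_aeval_poly]
    apply congrArg (fun f => (MvPolynomial.aeval f) p)
    funext i
    simp
  have hωne : ω ≠ 0 := by
    set T : ℝ := 1 + ∑ i, |x i| / y i with hTdef
    have hTi : ∀ i, |x i| / y i ≤ T - 1 := by
      intro i
      rw [hTdef]
      simp only [add_sub_cancel_left]
      apply Finset.single_le_sum (f := fun j => |x j| / y j) _ (Finset.mem_univ i)
      intro j _
      exact div_nonneg (abs_nonneg _) (le_of_lt (hy j))
    have hcnn : ∀ i, 0 ≤ x i + T * y i := by
      intro i
      have h1 : |x i| ≤ (T - 1) * y i := by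
        rw [← div_le_iff₀ (hy i)] at *
        exact hTi i
      have h2 : 0 < y i := hy i
      have := neg_abs_le (x i)
      nlinarith
    intro hω0
    have hev := hωeval (-Complex.I * (T:ℝ))
    rw [hω0, Polynomial.eval_zero] at hev
    have hvec : (fun i => (x i:ℂ) + Complex.I * (y i:ℂ) * (-Complex.I * ((T:ℝ):ℂ)))
        = fun i => ((x i + T * y i : ℝ):ℂ) := by
      funext i
      push_cast
      rw [show Complex.I * (y i:ℂ) * (-Complex.I * ((T:ℝ):ℂ))
          = -(Complex.I*Complex.I) * (y i:ℂ) * ((T:ℝ):ℂ) from by ring]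
      rw [Complex.I_mul_I]
      push_cast
      ring
    rw [hvec, aeval_real] at hev
    have := hF1 (fun i => x i + T * y i) hcnn 1 one_pos
    rw [one_smul] at this
    exact this (by exact_mod_cast hev.symm)
  obtain ⟨β', hβ'⟩ : ∃ β' : ℝ, 1 ≤ β' ∧ ω.eval ((β':ℝ):ℂ) ≠ 0 := by
    have hfin : {b : ℝ | ω.IsRoot ((b:ℝ):ℂ)}.Finite := by
      apply Set.Finite.preimage (Set.injOn_of_injective Complex.ofReal_injective)
        (Polynomial.finite_setOf_isRoot hωne)
    have hInf : (Set.Ici (1:ℝ)).Infinite := Set.Ici_infinite 1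
    obtain ⟨β', hmem, hnot⟩ := (hInf.diff hfin).nonempty
    exact ⟨β', hmem, fun h => hnot h⟩
  obtain ⟨hβ'1, hβ'ne⟩ := hβ'
  have hβval : Ecal p N 1 (fun i => (x i:ℂ) + (y i:ℂ) * ((β':ℝ):ℂ) * Complex.I) ≠ 0 := by
    rw [Ecal_one]
    intro h
    apply hβ'ne
    rw [hωeval]
    rw [show (fun i => (x i:ℂ) + Complex.I * (y i:ℂ) * ((β':ℝ):ℂ))
        = fun i => (x i:ℂ) + (y i:ℂ) * ((β':ℝ):ℂ) * Complex.I from by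
      funext i; ring_nf]
    exact h
  -- the approximating polynomials
  set ρ : ℝ → Polynomial ℂ := fun e =>
      qPoly p N 1 ((e:ℝ):ℂ) (fun i => ((x i:ℝ):ℂ)) y with hρdef
  have hρeval : ∀ (e : ℝ) (τ : ℂ), (ρ e).eval τ
      = Ecal p N (1 + ((e:ℝ):ℂ) * τ) (fun i => ((x i:ℝ):ℂ) + (y i:ℂ) * τ) :=
    fun e τ => eval_qPoly p N 1 _ _ y τ
  have hρcoeff : ∀ e : ℝ, (ρ e).coeff N = Ecal p N ((e:ℝ):ℂ) (fun i => (y i:ℂ)) :=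
    fun e => coeff_qPoly_top p N 1 _ _ y
  have hkey : ∀ (e : ℝ), 0 < e →
      Complex.abs ((ρ e).eval (((β':ℝ):ℂ) * Complex.I))
        ≤ Complex.abs ((ρ e).eval (((1:ℝ):ℂ) * Complex.I)) * β' ^ N := by
    intro e he
    have hcε : (ρ e).coeff N ≠ 0 := by
      rw [hρcoeff]
      exact Ecal_pos_real hF1 y (fun i => le_of_lt (hy i)) he
    have hρne : ρ e ≠ 0 := fun h => hcε (by rw [h, Polynomial.coeff_zero])
    have hdeg : (ρ e).natDegree = N := by
      refine le_antisymm (natDegree_qPoly_le p N 1 _ _ y) ?_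
      exact Polynomial.le_natDegree_of_ne_zero hcε
    have hcard : Multiset.card (ρ e).roots = (ρ e).natDegree :=
      (Polynomial.splits_iff_card_roots).mp (IsAlgClosed.splits _)
    have hreal : ∀ r ∈ (ρ e).roots, r.im = 0 := by
      intro r hr
      have hroot : (ρ e).eval r = 0 := (Polynomial.mem_roots hρne).mp hr
      by_contra him
      rw [hρeval] at hroot
      exact step1' e he r him hroot
    have h2p := realrooted_two_point hcard hreal (β := 1) (β' := β') one_pos hβ'1
    rw [hdeg] at h2p
    calc Complex.abs ((ρ e).eval (((β':ℝ):ℂ) * Complex.I))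
        = Complex.abs ((ρ e).eval (((β':ℝ):ℂ) * Complex.I)) * 1 ^ N := by
          rw [one_pow, mul_one]
      _ ≤ Complex.abs ((ρ e).eval (((1:ℝ):ℂ) * Complex.I)) * β' ^ N := h2p
  -- pass to the limit e → 0⁺
  set G : ℝ → ℝ := fun e => Complex.abs (Ecal p N (1 + ((e:ℝ):ℂ) * (((β':ℝ):ℂ) * Complex.I))
      (fun i => ((x i:ℝ):ℂ) + (y i:ℂ) * (((β':ℝ):ℂ) * Complex.I))) with hGdef
  set H : ℝ → ℝ := fun e => Complex.abs (Ecal p N (1 + ((e:ℝ):ℂ) * (((1:ℝ):ℂ) * Complex.I))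
      (fun i => ((x i:ℝ):ℂ) + (y i:ℂ) * (((1:ℝ):ℂ) * Complex.I))) * β' ^ N with hHdef
  have hGH : ∀ n : ℕ, G (1/((n:ℝ)+1)) ≤ H (1/((n:ℝ)+1)) := by
    intro n
    have he : (0:ℝ) < 1/((n:ℝ)+1) := by positivity
    have := hkey (1/((n:ℝ)+1)) he
    rw [hρeval, hρeval] at this
    exact this
  have hwcont : ∀ w0 : ℂ, Continuous fun e : ℝ => Complex.abs (Ecal p N (1 + ((e:ℝ):ℂ) * w0)
      (fun i => ((x i:ℝ):ℂ) + (y i:ℂ) * w0)) := by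
    intro w0
    apply Complex.continuous_abs.comp
    have h1 : Continuous fun e : ℝ => ((1 + ((e:ℝ):ℂ) * w0,
        fun i => ((x i:ℝ):ℂ) + (y i:ℂ) * w0) : ℂ × (Fin ℓ → ℂ)) := by
      apply Continuous.prodMk
      · exact continuous_const.add (Complex.continuous_ofReal.mul continuous_const)
      · exact continuous_const
    exact (continuous_Ecal p N).comp h1
  have hθn : Filter.Tendsto (fun n : ℕ => 1 / ((n:ℝ) + 1)) Filter.atTop (nhds 0) :=
    tendsto_one_div_add_atTop_nhds_zero_nat
  have hGtend : Filter.Tendsto (fun n : ℕ => G (1/((n:ℝ)+1))) Filter.atTop (nhds (G 0)) :=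
    (((hwcont _).continuousAt).tendsto).comp hθn
  have hHtend : Filter.Tendsto (fun n : ℕ => H (1/((n:ℝ)+1))) Filter.atTop (nhds (H 0)) := by
    apply Filter.Tendsto.mul_const
    exact (((hwcont _).continuousAt).tendsto).comp hθn
  have hle : G 0 ≤ H 0 := le_of_tendsto_of_tendsto' hGtend hHtend hGH
  have hH0 : H 0 = 0 := by
    rw [hHdef]
    simp only []
    rw [show (1 + ((0:ℝ):ℂ) * (((1:ℝ):ℂ) * Complex.I)) = (1:ℂ) from by push_cast; ring]
    rw [show (fun i => ((x i:ℝ):ℂ) + (y i:ℂ) * (((1:ℝ):ℂ) * Complex.I))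
        = fun i => (x i:ℂ) + (y i:ℂ) * Complex.I from by
      funext i; push_cast; ring]
    rw [hE0]
    simp
  have hG0 : G 0 ≠ 0 := by
    rw [hGdef]
    simp only []
    rw [show (1 + ((0:ℝ):ℂ) * (((β':ℝ):ℂ) * Complex.I)) = (1:ℂ) from by push_cast; ring]
    rw [show (fun i => ((x i:ℝ):ℂ) + (y i:ℂ) * (((β':ℝ):ℂ) * Complex.I))
        = fun i => (x i:ℂ) + (y i:ℂ) * ((β':ℝ):ℂ) * Complex.I from by
      funext i; push_cast; ring]
    exact ne_of_gt (Complex.abs.pos hβval)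
  have hG0' : 0 < G 0 := by
    rcases lt_or_eq_of_le (Complex.abs.nonneg _) with h | h
    · exact h
    · exact absurd h.symm hG0
  rw [hH0] at hle
  linarith

end MainNonvanish
theorem stmt3 (ℓ : ℕ) (p : MvPolynomial (Fin ℓ) ℝ) (hp : IsRealZero p)
    (horthant : {a : Fin ℓ → ℝ | ∀ i, 0 ≤ a i} ⊆ rigidlyConvexSet p) :
    IsStable p := by
  have hF1 : ∀ c : Fin ℓ → ℝ, (∀ i, 0 ≤ c i) → ∀ s : ℝ, 0 < s →
      MvPolynomial.eval (s • c) p ≠ 0 := by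
    intro c hc s hs
    have hmem : (2*s) • c ∈ {a : Fin ℓ → ℝ | ∀ i, 0 ≤ a i} := by
      intro i
      simp only [Pi.smul_apply, smul_eq_mul]
      exact mul_nonneg (by linarith) (hc i)
    have h := horthant hmem (1/2) ⟨by norm_num, by norm_num⟩
    rw [smul_smul] at h
    rw [show (1/2 : ℝ) * (2*s) = s from by ring] at h
    exact h
  intro a b ha
  set f : Polynomial ℝ := MvPolynomial.aeval
      (fun i => Polynomial.C (a i) * Polynomial.X + Polynomial.C (b i)) p with hfdef
  have hfeval : ∀ z : ℂ, Polynomial.aeval z f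
      = MvPolynomial.aeval (fun i => (a i:ℂ) * z + (b i:ℂ)) p := by
    intro z
    rw [hfdef, caeval_aeval_poly]
    apply congrArg (fun g => (MvPolynomial.aeval g) p)
    funext i
    simp [Complex.coe_algebraMap]
  -- the key nonvanishing result
  have key : ∀ w : ℂ, 0 < w.im → MvPolynomial.aeval (fun i => (a i:ℂ)*w + (b i:ℂ)) p ≠ 0 := by
    intro w hw
    set x : Fin ℓ → ℝ := fun i => a i * w.re + b i with hxdef
    set y : Fin ℓ → ℝ := fun i => a i * w.im with hydef
    have hy : ∀ i, 0 < y i := fun i => mul_pos (ha i) hw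
    have hvec : (fun i => (a i:ℂ)*w + (b i:ℂ)) = fun i => (x i:ℂ) + (y i:ℂ) * Complex.I := by
      funext i
      rw [hxdef, hydef]
      apply Complex.ext
      · push_cast
        simp [Complex.add_re, Complex.mul_re]
      · push_cast
        simp [Complex.add_im, Complex.mul_im]
    rw [hvec]
    exact main_nonvanish hp hF1 x y hy
  constructor
  · -- f ≠ 0
    intro hf0
    set T : ℝ := 1 + ∑ i, |b i| / a i with hTdef
    have hTi : ∀ i, |b i| / a i ≤ T - 1 := by
      intro i
      rw [hTdef]
      simp only [add_sub_cancel_left]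
      apply Finset.single_le_sum (f := fun j => |b j| / a j) _ (Finset.mem_univ i)
      intro j _
      exact div_nonneg (abs_nonneg _) (le_of_lt (ha j))
    have hcnn : ∀ i, 0 ≤ a i * T + b i := by
      intro i
      have h1 : |b i| ≤ (T - 1) * a i := by
        rw [← div_le_iff₀ (ha i)]
        exact hTi i
      have := neg_abs_le (b i)
      nlinarith [ha i]
    have hev := hfeval ((T:ℝ):ℂ)
    rw [hf0, map_zero] at hev
    have hvec : (fun i => (a i:ℂ)*((T:ℝ):ℂ) + (b i:ℂ)) = fun i => ((a i * T + b i : ℝ):ℂ) := by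
      funext i
      push_cast
      ring
    rw [hvec, aeval_real] at hev
    have h2 := hF1 (fun i => a i * T + b i) hcnn 1 one_pos
    rw [one_smul] at h2
    exact h2 (by exact_mod_cast hev.symm)
  · -- real roots
    intro z hz
    by_contra him
    rw [hfeval] at hz
    rcases lt_trichotomy z.im 0 with hneg | h0 | hpos
    · have hconj := aeval_conj p (fun i => (a i:ℂ)*z + (b i:ℂ))
      rw [hz, map_zero] at hconj
      have hv : (fun i => (starRingEnd ℂ) ((a i:ℂ)*z + (b i:ℂ)))
          = fun i => (a i:ℂ) * ((starRingEnd ℂ) z) + (b i:ℂ) := by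
        funext i
        simp [map_add, map_mul, Complex.conj_ofReal]
      rw [hv] at hconj
      have himpos : 0 < ((starRingEnd ℂ) z).im := by
        rw [Complex.conj_im]
        linarith
      exact key _ himpos hconj
    · exact him h0
    · exact key z hpos hz
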